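/- Let μ ∈ ℝ, σ > 0, ξ ≠ 0, 0 < ε < 1 and a > 0, set ζ = (ε^(−ξ) − 1)/ξ, and assume σζ + μ > 0. If B > 0 satisfies 1 + ξ(a/B − μ)/σ > 0 and (1 + ξ(a/B − μ)/σ)^(−1/ξ) ≤ ε, then B ≤ a/(σζ + μ). Hence B* = a/(σζ + μ) is the maximal feasible image size under the URLLC constraint. -/
import Mathlib


open Real

/-- With `ζ = (ε^(−ξ) − 1)/ξ` and `σζ + μ > 0`: any `B > 0` in the domain
(`1 + ξ(a/B − μ)/σ > 0`) satisfying the URLLC constraint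
`(1 + ξ(a/B − μ)/σ)^(−1/ξ) ≤ ε` obeys `B ≤ a/(σζ + μ)`; hence
`B* = a/(σζ + μ)` is the maximal feasible image size. -/
theorem optimal_B_maximal (μ σ ξ ε a ζ : ℝ) (hσ : 0 < σ) (hξ : ξ ≠ 0)
    (hε0 : 0 < ε) (hε1 : ε < 1) (ha : 0 < a)
    (hζ : ζ = (ε ^ (-ξ) - 1) / ξ) (hpos : 0 < σ * ζ + μ)
    (B : ℝ) (hB : 0 < B) (hdom : 0 < 1 + ξ * (a / B - μ) / σ)
    (hcon : (1 + ξ * (a / B - μ) / σ) ^ (-1 / ξ) ≤ ε) :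
    B ≤ a / (σ * ζ + μ) := by
  set t := 1 + ξ * (a / B - μ) / σ with ht
  have hpow : (t ^ (-1 / ξ)) ^ (-ξ) = t := by
    rw [← Real.rpow_mul hdom.le, show (-1 / ξ) * (-ξ) = 1 by field_simp,
      Real.rpow_one]
  have hma : ξ * (a / B - μ) / σ = ξ * ((a / B - μ) / σ) := mul_div_assoc ξ _ σ
  -- key: ζ ≤ (a/B - μ)/σ
  have hkey : ζ ≤ (a / B - μ) / σ := by
    rcases lt_or_gt_of_ne hξ with hneg | hposξ
    · -- ξ < 0: exponent -ξ > 0, rpow monotone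
      have h1 : (t ^ (-1 / ξ)) ^ (-ξ) ≤ ε ^ (-ξ) :=
        Real.rpow_le_rpow (Real.rpow_nonneg hdom.le _) hcon (by linarith)
      rw [hpow] at h1
      -- t ≤ ε^(-ξ)  ⇒  ξ * s ≤ ε^(-ξ) - 1  ⇒  ζ ≤ s (dividing by ξ < 0 flips)
      rw [hζ]
      rw [ht] at h1
      rw [hma] at h1
      have : ξ * ((a / B - μ) / σ) ≤ ε ^ (-ξ) - 1 := by linarith
      calc (ε ^ (-ξ) - 1) / ξ ≤ (ξ * ((a / B - μ) / σ)) / ξ :=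
            div_le_div_of_nonpos_of_le hneg.le this
        _ = (a / B - μ) / σ := mul_div_cancel_left₀ _ hξ
    · -- ξ > 0: exponent -ξ < 0, rpow antitone
      have h1 : ε ^ (-ξ) ≤ (t ^ (-1 / ξ)) ^ (-ξ) :=
        Real.rpow_le_rpow_of_nonpos (by positivity) hcon (by linarith)
      rw [hpow] at h1
      rw [hζ, ht] at *
      rw [hma] at h1
      have : ε ^ (-ξ) - 1 ≤ ξ * ((a / B - μ) / σ) := by linarith
      calc (ε ^ (-ξ) - 1) / ξ ≤ (ξ * ((a / B - μ) / σ)) / ξ :=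
            div_le_div_of_nonneg_right this hposξ.le
        _ = (a / B - μ) / σ := mul_div_cancel_left₀ _ hξ
  have h2 : σ * ζ + μ ≤ a / B := by
    have h3 : ζ * σ ≤ (a / B - μ) / σ * σ := mul_le_mul_of_nonneg_right hkey hσ.le
    rw [div_mul_cancel₀ _ hσ.ne'] at h3
    linarith
  have h4 : B * (σ * ζ + μ) ≤ B * (a / B) := mul_le_mul_of_nonneg_left h2 hB.le
  rw [le_div_iff₀ hpos]
  calc B * (σ * ζ + μ) ≤ B * (a / B) := h4
    _ = a := by field_simp
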